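/- arXiv:2207.07395 — 2 statements merged into one kernel-verified Lean document; each statement's English description precedes it below -/
import Mathlib

section
/- Any locally projective geometry X is generated by lines and planes: a subset A ⊆ X is a subspace if and only if it contains the line through any two of its distinct points and the plane through any three of its non-collinear points. -/
/-- A *geometry*: a closure space presented by its family of subspaces, satisfying
axioms G1 (∅, univ, singletons are subspaces), G2 (intersections of subspaces are
subspaces), G3 (MacLane–Steinitz exchange: no subspace strictly between `S` and `S ∨ x`)
and G4 (finitary). -/
structure GeometryOn (X : Type*) where
  IsSubspace : Set X → Prop
  empty_isSubspace : IsSubspace ∅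
  univ_isSubspace : IsSubspace Set.univ
  singleton_isSubspace : ∀ x : X, IsSubspace {x}
  sInter_isSubspace : ∀ 𝒮 : Set (Set X), (∀ S ∈ 𝒮, IsSubspace S) → IsSubspace (⋂₀ 𝒮)
  exchange : ∀ (S : Set X) (x : X), IsSubspace S → x ∉ S →
    ¬ ∃ S' : Set X, IsSubspace S' ∧ S ⊂ S' ∧ S' ⊂ ⋂₀ {T | IsSubspace T ∧ S ∪ {x} ⊆ T}
  finitary : ∀ (A : Set X) (x : X), x ∈ ⋂₀ {T | IsSubspace T ∧ A ⊆ T} →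
    ∃ F : Finset X, ↑F ⊆ A ∧ x ∈ ⋂₀ {T | IsSubspace T ∧ ↑F ⊆ T}

namespace GeometryOn

variable {X X' : Type*}

/-- The closure of `A`: the least subspace containing `A`. -/
def cl (G : GeometryOn X) (A : Set X) : Set X := ⋂₀ {T | G.IsSubspace T ∧ A ⊆ T}

/-- `A` is independent: no point of `A` lies in the closure of the remaining ones. -/
def Independent (G : GeometryOn X) (A : Set X) : Prop := ∀ a ∈ A, a ∉ G.cl (A \ {a})

/-- `B` is a basis of the subspace `S`: independent and generating `S`. -/
def IsBasisOf (G : GeometryOn X) (B S : Set X) : Prop :=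
  B ⊆ S ∧ G.Independent B ∧ G.cl B = S

/-- `S` has (finite) dimension `d ∈ ℤ`: it has a basis with `d + 1` elements. -/
def HasDimZ (G : GeometryOn X) (S : Set X) (d : ℤ) : Prop :=
  ∃ B : Finset X, G.IsBasisOf ↑B S ∧ (B.card : ℤ) = d + 1

/-- A morphism of geometries: preimages of subspaces are subspaces. -/
def IsMorphism (G : GeometryOn X) (G' : GeometryOn X') (φ : X → X') : Prop :=
  ∀ S' : Set X', G'.IsSubspace S' → G.IsSubspace (φ ⁻¹' S')

end GeometryOn

namespace GeometryOn

/-- The equivalence relation on `X ∖ E` defining the quotient `X/E`: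
`x₁ ∼ x₂ ↔ x₁ ∨ E = x₂ ∨ E`. -/
def QRel {X : Type*} (G : GeometryOn X) (E : Set X) (x₁ x₂ : {x : X // x ∉ E}) : Prop :=
  G.cl (E ∪ {x₁.1}) = G.cl (E ∪ {x₂.1})

/-- The distinguished family of subsets of `X/E`: the sets `S/E` for `S` a subspace of
`X` containing `E`. -/
def QSubspace {X : Type*} (G : GeometryOn X) (E : Set X)
    (T : Set (Quot (G.QRel E))) : Prop :=
  ∃ S : Set X, G.IsSubspace S ∧ E ⊆ S ∧
    T = Quot.mk (G.QRel E) '' {x : {x : X // x ∉ E} | x.1 ∈ S}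

/-- A partial morphism `X ⇢ X'` with exceptional subspace `E`: a morphism of geometries
from the subgeometry `X ∖ E` to `X'` which is constant on the classes `x ∨ E`. -/
def IsPartialMorphism {X X' : Type*} (G : GeometryOn X) (G' : GeometryOn X')
    (E : Set X) (φ : {x : X // x ∉ E} → X') : Prop :=
  (∀ S' : Set X', G'.IsSubspace S' →
    ∃ S : Set X, G.IsSubspace S ∧ φ ⁻¹' S' = Subtype.val ⁻¹' S) ∧
  (∀ x₁ x₂ : {x : X // x ∉ E}, G.cl (E ∪ {x₁.1}) = G.cl (E ∪ {x₂.1}) → φ x₁ = φ x₂)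

end GeometryOn

namespace GeometryOn

/-- A geometry is generated by lines: subspaces are exactly the subsets containing the
line through any two of their points. -/
def GeneratedByLines {X : Type*} (G : GeometryOn X) : Prop :=
  ∀ S : Set X, G.IsSubspace S ↔ ∀ x₁ ∈ S, ∀ x₂ ∈ S, G.cl {x₁, x₂} ⊆ S

/-- A geometry is a projective space: it is generated by its lines (the closures of
pairs of distinct points, each containing at least the two points), and the
Veblen–Young axiom holds: a line meeting two sides of a (nondegenerate) triangle,
not in their common vertex, meets the third side. -/
def IsProjective {X : Type*} (G : GeometryOn X) : Prop :=
  G.GeneratedByLines ∧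
  ∀ a b c p q : X,
    a ∉ G.cl {b, c} → b ∉ G.cl {a, c} → c ∉ G.cl {a, b} →
    p ∈ G.cl {a, b} → q ∈ G.cl {a, c} → p ≠ a → q ≠ a → p ≠ q →
    (G.cl {p, q} ∩ G.cl {b, c}).Nonempty

end GeometryOn

namespace GeometryOn

/-- A geometry is locally projective: the quotient `X/x` is a projective space for
every point `x`. -/
def LocallyProjective {X : Type*} (G : GeometryOn X) : Prop :=
  ∀ x : X, ∃ Q : GeometryOn (Quot (G.QRel ({x} : Set X))),
    Q.IsSubspace = G.QSubspace {x} ∧ Q.IsProjective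

end GeometryOn

namespace GeometryOn
variable {X : Type*} (G : GeometryOn X)

theorem aux_subset_cl (A : Set X) : A ⊆ G.cl A :=
  fun _ hx => Set.mem_sInter.2 fun _ hT => hT.2 hx

theorem aux_cl_isSubspace (A : Set X) : G.IsSubspace (G.cl A) :=
  G.sInter_isSubspace _ fun _ hT => hT.1

theorem aux_cl_min {A S : Set X} (hS : G.IsSubspace S) (h : A ⊆ S) : G.cl A ⊆ S :=
  fun _ hx => Set.mem_sInter.1 hx S ⟨hS, h⟩

theorem aux_cl_mono {A B : Set X} (h : A ⊆ B) : G.cl A ⊆ G.cl B :=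
  G.aux_cl_min (G.aux_cl_isSubspace B) (h.trans (G.aux_subset_cl B))

theorem aux_cl_eq_self {S : Set X} (hS : G.IsSubspace S) : G.cl S = S :=
  le_antisymm (G.aux_cl_min hS le_rfl) (G.aux_subset_cl S)

theorem aux_cl_singleton (a : X) : G.cl {a} = {a} :=
  G.aux_cl_eq_self (G.singleton_isSubspace a)

theorem aux_cl_le_cl {A B : Set X} (h : A ⊆ G.cl B) : G.cl A ⊆ G.cl B :=
  G.aux_cl_min (G.aux_cl_isSubspace B) h

/-- Steinitz exchange derived from G3. -/
theorem aux_exchange {S : Set X} {a b : X} (hb : b ∈ G.cl (S ∪ {a}))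
    (hbS : b ∉ G.cl S) : a ∈ G.cl (S ∪ {b}) := by
  by_cases haS : a ∈ G.cl S
  · exact absurd (G.aux_cl_le_cl (by
      refine Set.union_subset (G.aux_subset_cl S) ?_
      simpa using haS) hb) hbS
  have hkey : ⋂₀ {T | G.IsSubspace T ∧ G.cl S ∪ {a} ⊆ T} = G.cl (S ∪ {a}) := by
    apply le_antisymm
    · refine fun x hx => Set.mem_sInter.1 hx _ ⟨G.aux_cl_isSubspace _, ?_⟩
      refine Set.union_subset (G.aux_cl_mono Set.subset_union_left) ?_
      simpa using G.aux_subset_cl (S ∪ {a}) (by simp)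
    · refine G.aux_cl_min (G.sInter_isSubspace _ fun _ hT => hT.1) ?_
      refine Set.union_subset (fun x hx T hT => hT.2 (Or.inl (G.aux_subset_cl S hx)))
        (fun x hx T hT => hT.2 (Or.inr hx))
  have hne := G.exchange (G.cl S) a (G.aux_cl_isSubspace S) haS
  rw [hkey] at hne
  by_contra haSb
  refine hne ⟨G.cl (S ∪ {b}), G.aux_cl_isSubspace _, ?_, ?_⟩
  · refine ⟨G.aux_cl_le_cl ((G.aux_subset_cl S).trans (G.aux_cl_mono Set.subset_union_left)), ?_⟩
    intro hsub
    exact hbS (hsub (G.aux_subset_cl _ (by simp)))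
  · refine ⟨G.aux_cl_le_cl (Set.union_subset ((G.aux_subset_cl S).trans
      (G.aux_cl_mono Set.subset_union_left)) (by simpa using hb)), ?_⟩
    intro hsub
    exact haSb (hsub (G.aux_subset_cl _ (by simp)))

/-- Pair version of exchange. -/
theorem aux_exchange_pair {a b c : X} (h : b ∈ G.cl {a, c}) (hba : b ≠ a) :
    c ∈ G.cl {a, b} := by
  have h1 : b ∈ G.cl ({a} ∪ {c}) := by rwa [Set.union_singleton, Set.pair_comm c a]
  have h2 : b ∉ G.cl {a} := by rwa [G.aux_cl_singleton, Set.mem_singleton_iff]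
  have := G.aux_exchange h1 h2
  rw [Set.union_singleton] at this
  rw [Set.pair_comm a b]; exact this

theorem aux_pair_subset {a b : X} {S : Set X} (ha : a ∈ S) (hb : b ∈ S) :
    ({a, b} : Set X) ⊆ S := by
  intro x hx; rcases hx with rfl | rfl <;> assumption

theorem aux_cl_pair_subset {a b : X} {S : Set X} (hS : G.IsSubspace S)
    (ha : a ∈ S) (hb : b ∈ S) : G.cl {a, b} ⊆ S :=
  G.aux_cl_min hS (aux_pair_subset ha hb)

theorem aux_mem_cl_pair_left (a b : X) : a ∈ G.cl {a, b} := G.aux_subset_cl _ (by simp)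
theorem aux_mem_cl_pair_right (a b : X) : b ∈ G.cl {a, b} := G.aux_subset_cl _ (by simp)

end GeometryOn
namespace GeometryOn
variable {X : Type*} (G : GeometryOn X)

/-- Key step 1: a line through a point of a subspace `C` and a point of a line
`t ∨ q` (with `t ∈ C`) lies in the union of lines from `C` to `q`. -/
theorem aux_L1 (hP : G.IsProjective) {C : Set X} (hC : G.IsSubspace C) {q t c u w : X}
    (ht : t ∈ C) (hc : c ∈ C) (hu : u ∈ G.cl {t, q}) (hw : w ∈ G.cl {c, u}) :
    ∃ t' ∈ C, w ∈ G.cl {t', q} := by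
  by_cases hqC : q ∈ C
  · have huC : u ∈ C := G.aux_cl_pair_subset hC ht hqC hu
    have hwC : w ∈ C := G.aux_cl_pair_subset hC hc huC hw
    exact ⟨w, hwC, G.aux_mem_cl_pair_left w q⟩
  by_cases huC : u ∈ C
  · exact ⟨w, G.aux_cl_pair_subset hC hc huC hw, G.aux_mem_cl_pair_left w q⟩
  by_cases huq : u = q
  · exact ⟨c, hc, by rwa [huq] at hw⟩
  by_cases hwC : w ∈ C
  · exact ⟨w, hwC, G.aux_mem_cl_pair_left w q⟩
  by_cases hwu : w = u
  · exact ⟨t, ht, by rwa [hwu]⟩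
  by_cases hct : c = t
  · -- cl {c, u} = cl {t, u} ⊆ cl {t, q}
    subst hct
    have : G.cl {c, u} ⊆ G.cl {c, q} :=
      G.aux_cl_pair_subset (G.aux_cl_isSubspace _) (G.aux_mem_cl_pair_left c q) hu
    exact ⟨c, hc, this hw⟩
  by_cases hwq : w = q
  · exact ⟨c, hc, hwq ▸ G.aux_mem_cl_pair_right c q⟩
  -- nondegenerate case; exchange facts
  have hut : u ≠ t := fun h => huC (h ▸ ht)
  have hqtu : q ∈ G.cl {t, u} := G.aux_exchange_pair hu hut
  have hclut : G.cl {t, u} = G.cl {t, q} := by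
    apply le_antisymm
    · exact G.aux_cl_pair_subset (G.aux_cl_isSubspace _) (G.aux_mem_cl_pair_left t q) hu
    · exact G.aux_cl_pair_subset (G.aux_cl_isSubspace _) (G.aux_mem_cl_pair_left t u) hqtu
  -- Veblen on triangle (u, c, t) with p = w ∈ cl {u,c}, q' = q ∈ cl {u,t}
  have h1 : u ∉ G.cl {c, t} := fun h => huC (G.aux_cl_pair_subset hC hc ht h)
  have h2 : c ∉ G.cl {u, t} := by
    rw [Set.pair_comm u t, hclut]
    intro h
    have := G.aux_exchange_pair h (fun hcq2 : c = t => hct hcq2)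
    -- c ∈ cl {t, q}, c ≠ t ⇒ q ∈ cl {t, c} ⊆ C
    exact hqC (G.aux_cl_pair_subset hC ht hc this)
  have h3 : t ∉ G.cl {u, c} := by
    intro h
    rw [Set.pair_comm u c] at h
    have := G.aux_exchange_pair h (fun htc : t = c => hct htc.symm)
    exact huC (G.aux_cl_pair_subset hC hc ht this)
  have hwuc : w ∈ G.cl {u, c} := by rwa [Set.pair_comm u c]
  have hqut : q ∈ G.cl {u, t} := by rwa [Set.pair_comm u t]
  obtain ⟨s, hs1, hs2⟩ := hP.2 u c t w q h1 h2 h3 hwuc hqut hwu (Ne.symm huq) hwq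
  have hsC : s ∈ C := G.aux_cl_pair_subset hC hc ht hs2
  have hsq : s ≠ q := fun h => hqC (h ▸ hsC)
  rw [Set.pair_comm w q] at hs1
  have : w ∈ G.cl {q, s} := G.aux_exchange_pair hs1 hsq
  exact ⟨s, hsC, by rwa [Set.pair_comm q s] at this⟩

/-- Key step 2: a line through two points of lines from `C` to `q` lies in the
union of lines from `C` to `q`. -/
theorem aux_L2 (hP : G.IsProjective) {C : Set X} (hC : G.IsSubspace C) {q t₁ t₂ u₁ u₂ w : X}
    (ht₁ : t₁ ∈ C) (ht₂ : t₂ ∈ C) (hu₁ : u₁ ∈ G.cl {t₁, q}) (hu₂ : u₂ ∈ G.cl {t₂, q})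
    (hw : w ∈ G.cl {u₁, u₂}) : ∃ t ∈ C, w ∈ G.cl {t, q} := by
  by_cases hu₁C : u₁ ∈ C
  · exact G.aux_L1 hP hC ht₂ hu₁C hu₂ hw
  by_cases hu₂C : u₂ ∈ C
  · exact G.aux_L1 hP hC ht₁ hu₂C hu₁ (by rwa [Set.pair_comm u₁ u₂] at hw)
  by_cases h21 : u₂ ∈ G.cl {t₁, q}
  · exact ⟨t₁, ht₁, G.aux_cl_pair_subset (G.aux_cl_isSubspace _) hu₁ h21 hw⟩
  by_cases h12 : u₁ ∈ G.cl {t₂, q}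
  · exact ⟨t₂, ht₂, G.aux_cl_pair_subset (G.aux_cl_isSubspace _) h12 hu₂ hw⟩
  have hu12 : u₁ ≠ u₂ := fun h => h21 (h ▸ hu₁)
  have hu₁q : u₁ ≠ q := fun h => h12 (h ▸ G.aux_mem_cl_pair_right t₂ q)
  have hu₂q : u₂ ≠ q := fun h => h21 (h ▸ G.aux_mem_cl_pair_right t₁ q)
  have hqC : q ∉ C := fun h => hu₁C (G.aux_cl_pair_subset hC ht₁ h hu₁)
  have ht12 : t₁ ≠ t₂ := fun h => h21 (h ▸ hu₂)
  by_cases hq12 : q ∈ G.cl {u₁, u₂}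
  · have := G.aux_exchange_pair hq12 (fun h : q = u₁ => hu₁q h.symm)
    -- u₂ ∈ cl {u₁, q}
    have hsub : G.cl {u₁, u₂} ⊆ G.cl {t₁, q} := by
      refine G.aux_cl_pair_subset (G.aux_cl_isSubspace _) hu₁ ?_
      exact G.aux_cl_pair_subset (G.aux_cl_isSubspace _) hu₁
        (G.aux_mem_cl_pair_right t₁ q) this
    exact ⟨t₁, ht₁, hsub hw⟩
  -- Veblen on triangle (q, t₁, t₂), p = u₁ ∈ cl {q,t₁}, q' = u₂ ∈ cl {q,t₂}
  have h1 : q ∉ G.cl {t₁, t₂} := fun h => hqC (G.aux_cl_pair_subset hC ht₁ ht₂ h)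
  have h2 : t₁ ∉ G.cl {q, t₂} := by
    intro h
    rw [Set.pair_comm q t₂] at h
    have := G.aux_exchange_pair h ht12
    exact hqC (G.aux_cl_pair_subset hC ht₂ ht₁ this)
  have h3 : t₂ ∉ G.cl {q, t₁} := by
    intro h
    rw [Set.pair_comm q t₁] at h
    have := G.aux_exchange_pair h (Ne.symm ht12)
    exact hqC (G.aux_cl_pair_subset hC ht₁ ht₂ this)
  have hu₁' : u₁ ∈ G.cl {q, t₁} := by rwa [Set.pair_comm q t₁]
  have hu₂' : u₂ ∈ G.cl {q, t₂} := by rwa [Set.pair_comm q t₂]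
  obtain ⟨s, hs1, hs2⟩ := hP.2 q t₁ t₂ u₁ u₂ h1 h2 h3 hu₁' hu₂' hu₁q hu₂q hu12
  have hsC : s ∈ C := G.aux_cl_pair_subset hC ht₁ ht₂ hs2
  have hsu₁ : s ≠ u₁ := fun h => hu₁C (h ▸ hsC)
  have hmem : u₂ ∈ G.cl {u₁, s} := G.aux_exchange_pair hs1 hsu₁
  have hwsub : w ∈ G.cl {s, u₁} := by
    rw [Set.pair_comm s u₁]
    exact G.aux_cl_pair_subset (G.aux_cl_isSubspace _) (G.aux_mem_cl_pair_left u₁ s) hmem hw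
  exact G.aux_L1 hP hC ht₁ hsC hu₁ hwsub

/-- The join lemma in a projective geometry. -/
theorem aux_join (hP : G.IsProjective) {C : Set X} (hC : G.IsSubspace C)
    (hne : C.Nonempty) {q y : X} (hy : y ∈ G.cl (C ∪ {q})) :
    ∃ t ∈ C, y ∈ G.cl {t, q} := by
  set U : Set X := {w | ∃ t ∈ C, w ∈ G.cl {t, q}} with hU
  have hUsub : G.IsSubspace U := by
    rw [hP.1 U]
    rintro w₁ ⟨s₁, hs₁, hw₁⟩ w₂ ⟨s₂, hs₂, hw₂⟩ w hw
    exact G.aux_L2 hP hC hs₁ hs₂ hw₁ hw₂ hw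
  have hsub : C ∪ {q} ⊆ U := by
    rintro x (hx | hx)
    · exact ⟨x, hx, G.aux_mem_cl_pair_left x q⟩
    · obtain ⟨t, ht⟩ := hne
      exact ⟨t, ht, by rw [Set.mem_singleton_iff.1 hx]; exact G.aux_mem_cl_pair_right t q⟩
  exact G.aux_cl_min hUsub hsub hy

end GeometryOn
namespace GeometryOn
variable {X : Type*} (G : GeometryOn X) {E : Set X}

theorem aux_qrel_of_mk_eq {x y : {x : X // x ∉ E}}
    (h : Quot.mk (G.QRel E) x = Quot.mk (G.QRel E) y) :
    G.cl (E ∪ {x.1}) = G.cl (E ∪ {y.1}) :=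
  congrArg (Quot.lift (fun z : {x : X // x ∉ E} => G.cl (E ∪ {z.1}))
    (fun _ _ h => h)) h

theorem aux_mem_of_qrel {S : Set X} (hS : G.IsSubspace S) (hE : E ⊆ S)
    {x y : {x : X // x ∉ E}} (h : G.cl (E ∪ {x.1}) = G.cl (E ∪ {y.1}))
    (hy : y.1 ∈ S) : x.1 ∈ S := by
  have hx : x.1 ∈ G.cl (E ∪ {x.1}) := G.aux_subset_cl _ (Or.inr rfl)
  rw [h] at hx
  exact G.aux_cl_min hS (Set.union_subset hE (by simpa using hy)) hx

theorem aux_mem_image {S : Set X} (hS : G.IsSubspace S) (hE : E ⊆ S)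
    (y : {x : X // x ∉ E}) :
    Quot.mk (G.QRel E) y ∈ Quot.mk (G.QRel E) '' {x : {x : X // x ∉ E} | x.1 ∈ S}
      ↔ y.1 ∈ S := by
  constructor
  · rintro ⟨x, hx, hxy⟩
    exact G.aux_mem_of_qrel hS hE (G.aux_qrel_of_mk_eq hxy.symm) hx
  · exact fun h => ⟨y, h, rfl⟩

theorem aux_qcl {Q : GeometryOn (Quot (G.QRel E))} (hQ : Q.IsSubspace = G.QSubspace E)
    (A : Set X) (y : {x : X // x ∉ E}) :
    Quot.mk (G.QRel E) y ∈ Q.cl (Quot.mk (G.QRel E) '' {x : {x : X // x ∉ E} | x.1 ∈ A})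
      ↔ y.1 ∈ G.cl (E ∪ A) := by
  have hEcl : E ⊆ G.cl (E ∪ A) := (Set.subset_union_left).trans (G.aux_subset_cl _)
  constructor
  · intro h
    have hT : Q.IsSubspace (Quot.mk (G.QRel E) ''
        {x : {x : X // x ∉ E} | x.1 ∈ G.cl (E ∪ A)}) := by
      rw [hQ]
      exact ⟨G.cl (E ∪ A), G.aux_cl_isSubspace _, hEcl, rfl⟩
    have hsub : Quot.mk (G.QRel E) '' {x : {x : X // x ∉ E} | x.1 ∈ A} ⊆
        Quot.mk (G.QRel E) '' {x : {x : X // x ∉ E} | x.1 ∈ G.cl (E ∪ A)} := by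
      rintro _ ⟨x, hx, rfl⟩
      exact ⟨x, G.aux_subset_cl _ (Or.inr hx), rfl⟩
    have := Set.mem_sInter.1 h _ ⟨hT, hsub⟩
    exact (G.aux_mem_image (G.aux_cl_isSubspace _) hEcl y).1 this
  · intro h
    refine Set.mem_sInter.2 ?_
    rintro T ⟨hT, hAT⟩
    rw [hQ] at hT
    obtain ⟨S, hS, hES, rfl⟩ := hT
    have hAS : A ⊆ S := by
      intro x hx
      by_cases hxE : x ∈ E
      · exact hES hxE
      · exact (G.aux_mem_image hS hES ⟨x, hxE⟩).1 (hAT ⟨⟨x, hxE⟩, hx, rfl⟩)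
    have : y.1 ∈ S := G.aux_cl_min hS (Set.union_subset hES hAS) h
    exact ⟨y, this, rfl⟩

theorem aux_image_pair {z b : X} (hz : z ∉ E) (hb : b ∉ E) :
    Quot.mk (G.QRel E) '' {x : {x : X // x ∉ E} | x.1 ∈ ({z, b} : Set X)} =
      {Quot.mk (G.QRel E) ⟨z, hz⟩, Quot.mk (G.QRel E) ⟨b, hb⟩} := by
  ext w
  constructor
  · rintro ⟨⟨x, hx⟩, hmem, rfl⟩
    rcases hmem with h | h
    · left; subst h; rfl
    · right; rw [Set.mem_singleton_iff] at h; subst h; rfl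
  · rintro (rfl | rfl)
    · exact ⟨⟨z, hz⟩, Or.inl rfl, rfl⟩
    · exact ⟨⟨b, hb⟩, Or.inr rfl, rfl⟩

end GeometryOn
namespace GeometryOn
variable {X : Type*} (G : GeometryOn X)

theorem aux_triple_subset {a b c : X} {S : Set X} (ha : a ∈ S) (hb : b ∈ S)
    (hc : c ∈ S) : ({a, b, c} : Set X) ⊆ S := by
  intro x hx
  rcases hx with rfl | rfl | rfl <;> assumption

theorem aux_main (hG : G.LocallyProjective) {A : Set X}
    (h : ∀ x₁ ∈ A, ∀ x₂ ∈ A, ∀ x₃ ∈ A, G.cl {x₁, x₂, x₃} ⊆ A) :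
    ∀ (n : ℕ) (F : Finset X), F.card ≤ n → ↑F ⊆ A → G.cl ↑F ⊆ A := by
  classical
  intro n
  induction n with
  | zero =>
    intro F hc _
    have hF : F = ∅ := Finset.card_eq_zero.1 (Nat.le_zero.1 hc)
    subst hF
    rw [Finset.coe_empty, G.aux_cl_eq_self G.empty_isSubspace]
    exact Set.empty_subset A
  | succ n ih =>
    intro F hc hFA
    by_cases hn : F.card ≤ n
    · exact ih F hn hFA
    have hcard : F.card = n + 1 := le_antisymm hc (by omega)
    by_cases h3 : F.card ≤ 3
    · -- small cases
      obtain h0 | h1 | h2 | h3' : F.card = 0 ∨ F.card = 1 ∨ F.card = 2 ∨ F.card = 3 := by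
        omega
      · have hF : F = ∅ := Finset.card_eq_zero.1 h0
        subst hF
        rw [Finset.coe_empty, G.aux_cl_eq_self G.empty_isSubspace]
        exact Set.empty_subset A
      · obtain ⟨a, rfl⟩ := Finset.card_eq_one.1 h1
        have ha : a ∈ A := hFA (by simp)
        have := h a ha a ha a ha
        simpa using this
      · obtain ⟨a, b, _, rfl⟩ := Finset.card_eq_two.1 h2
        have ha : a ∈ A := hFA (by simp)
        have hb : b ∈ A := hFA (by simp)
        have := h a ha a ha b hb
        simpa using this
      · obtain ⟨a, b, c, _, _, _, rfl⟩ := Finset.card_eq_three.1 h3'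
        have ha : a ∈ A := hFA (by simp)
        have hb : b ∈ A := hFA (by simp)
        have hc' : c ∈ A := hFA (by simp)
        have := h a ha b hb c hc'
        simpa using this
    -- main case : F.card = n + 1 ≥ 4
    push_neg at h3
    obtain ⟨e, he⟩ : F.Nonempty := Finset.card_pos.1 (by omega)
    obtain ⟨Q, hQsub, hQproj⟩ := hG e
    have hF'card : (F.erase e).card = n := by
      rw [Finset.card_erase_of_mem he, hcard]
      omega
    obtain ⟨b, hb⟩ : (F.erase e).Nonempty := Finset.card_pos.1 (by omega)
    have hbe : b ≠ e := Finset.ne_of_mem_erase hb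
    have hbF : b ∈ F := Finset.mem_of_mem_erase hb
    have hbE : b ∉ ({e} : Set X) := by simpa using hbe
    have hF''card : ((F.erase e).erase b).card = n - 1 := by
      rw [Finset.card_erase_of_mem hb, hF'card]
    obtain ⟨c, hcmem⟩ : ((F.erase e).erase b).Nonempty := Finset.card_pos.1 (by omega)
    intro y hy
    by_cases hye : y = e
    · exact hFA (hye ▸ he)
    have hyE : y ∉ ({e} : Set X) := by simpa using hye
    have hFeq : (↑F : Set X) = ({e} : Set X) ∪ ↑(F.erase e) := by
      ext x
      by_cases hx : x = e <;> simp [hx, he]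
    have hy' : y ∈ G.cl (({e} : Set X) ∪ ↑(F.erase e)) := hFeq ▸ hy
    have hyQ : Quot.mk (G.QRel {e}) ⟨y, hyE⟩ ∈ Q.cl (Quot.mk (G.QRel {e}) ''
        {x : {x : X // x ∉ ({e} : Set X)} | x.1 ∈ (↑(F.erase e) : Set X)}) :=
      (G.aux_qcl hQsub _ ⟨y, hyE⟩).2 hy'
    set C := Q.cl (Quot.mk (G.QRel {e}) ''
        {x : {x : X // x ∉ ({e} : Set X)} | x.1 ∈ (↑((F.erase e).erase b) : Set X)}) with hC
    have hCsub : Q.IsSubspace C := Q.aux_cl_isSubspace _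
    have hcE : c ∉ ({e} : Set X) := by
      simpa using Finset.ne_of_mem_erase (Finset.mem_of_mem_erase hcmem)
    have hCne : C.Nonempty :=
      ⟨Quot.mk (G.QRel {e}) ⟨c, hcE⟩, Q.aux_subset_cl _ ⟨⟨c, hcE⟩, by simp only [Set.mem_setOf_eq, Finset.mem_coe]; exact hcmem, rfl⟩⟩
    have himg : Quot.mk (G.QRel {e}) ''
        {x : {x : X // x ∉ ({e} : Set X)} | x.1 ∈ (↑(F.erase e) : Set X)} ⊆
        C ∪ {Quot.mk (G.QRel {e}) ⟨b, hbE⟩} := by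
      rintro _ ⟨⟨x, hxE⟩, hx, rfl⟩
      by_cases hxb : x = b
      · right
        subst hxb
        rfl
      · left
        exact Q.aux_subset_cl _ ⟨⟨x, hxE⟩, by simp only [Set.mem_setOf_eq, Finset.mem_coe] at hx ⊢; exact Finset.mem_erase.2 ⟨hxb, hx⟩, rfl⟩
    have hyQ' : Quot.mk (G.QRel {e}) ⟨y, hyE⟩ ∈
        Q.cl (C ∪ {Quot.mk (G.QRel {e}) ⟨b, hbE⟩}) :=
      Q.aux_cl_le_cl (himg.trans (Q.aux_subset_cl _)) hyQ
    obtain ⟨t, htC, hyt⟩ := Q.aux_join hQproj hCsub hCne hyQ'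
    obtain ⟨⟨z, hzE⟩, rfl⟩ := Quot.exists_rep t
    have hz : z ∈ G.cl (({e} : Set X) ∪ ↑((F.erase e).erase b)) :=
      (G.aux_qcl hQsub _ ⟨z, hzE⟩).1 htC
    have hEF'' : ({e} : Set X) ∪ (↑((F.erase e).erase b) : Set X) = ↑(F.erase b) := by
      ext x
      by_cases hx : x = e
      · simp [hx, he, Ne.symm hbe]
      · simp [hx, Finset.mem_erase]
    have hzA : z ∈ A := by
      refine ih (F.erase b) ?_ ((Finset.coe_subset.2 (Finset.erase_subset b F)).trans hFA) (hEF'' ▸ hz)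
      rw [Finset.card_erase_of_mem hbF, hcard]
      omega
    have hpair : Q.cl ({Quot.mk (G.QRel {e}) ⟨z, hzE⟩, Quot.mk (G.QRel {e}) ⟨b, hbE⟩} :
        Set (Quot (G.QRel ({e} : Set X)))) = Q.cl (Quot.mk (G.QRel {e}) ''
        {x : {x : X // x ∉ ({e} : Set X)} | x.1 ∈ ({z, b} : Set X)}) := by
      rw [G.aux_image_pair hzE hbE]
    have hy3 : y ∈ G.cl (({e} : Set X) ∪ {z, b}) :=
      (G.aux_qcl hQsub {z, b} ⟨y, hyE⟩).1 (hpair ▸ hyt)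
    rw [Set.singleton_union] at hy3
    exact h e (hFA he) z hzA b (hFA hbF) hy3

end GeometryOn

open GeometryOn in
/-- any locally projective geometry `X` is generated by lines and planes:
a subset `A ⊆ X` is a subspace iff for any three of its points (covering the cases of
two distinct points and of three non-collinear points) the closure `x₁ ∨ x₂ ∨ x₃` is
contained in `A`. -/
theorem locallyProjective_generated_by_lines_planes {X : Type*} (G : GeometryOn X)
    (hG : G.LocallyProjective) :
    ∀ A : Set X, G.IsSubspace A ↔
      ∀ x₁ ∈ A, ∀ x₂ ∈ A, ∀ x₃ ∈ A, G.cl {x₁, x₂, x₃} ⊆ A := by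
  intro A
  constructor
  · intro hA x₁ h₁ x₂ h₂ x₃ h₃
    exact G.aux_cl_min hA (aux_triple_subset h₁ h₂ h₃)
  · intro h
    have hclA : G.cl A ⊆ A := by
      intro y hy
      obtain ⟨F, hFA, hyF⟩ := G.finitary A y hy
      exact G.aux_main hG h F.card F le_rfl hFA hyF
    have hEq : G.cl A = A := le_antisymm hclA (G.aux_subset_cl A)
    rw [← hEq]
    exact G.aux_cl_isSubspace A
end

section
/- Let X be an affino-projective subgeometry of a projective space ℙ, witnessed by a hyperplane H with X∪H = ℙ. For a subspace E ⊆ X with closure Ē in ℙ: if E ⊄ H then X/E = ℙ/Ē; in general, X/E is an affino-projective subgeometry of ℙ/Ē. -/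
namespace GeometryOn

variable {P : Type*} (G : GeometryOn P)

lemma subset_cl' (A : Set P) : A ⊆ G.cl A := fun _ hx _ hT => hT.2 hx

lemma cl_isSubspace' (A : Set P) : G.IsSubspace (G.cl A) :=
  G.sInter_isSubspace _ (fun _ hS => hS.1)

lemma cl_min' {A S : Set P} (hS : G.IsSubspace S) (h : A ⊆ S) : G.cl A ⊆ S :=
  Set.sInter_subset_of_mem ⟨hS, h⟩

lemma cl_mono' {A B : Set P} (h : A ⊆ B) : G.cl A ⊆ G.cl B :=
  G.cl_min' (G.cl_isSubspace' B) (h.trans (G.subset_cl' B))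

lemma mem_cl_exchange {S : Set P} {x z : P} (hS : G.IsSubspace S) (hx : x ∉ S)
    (hz : z ∈ G.cl (S ∪ {x})) (hzS : z ∉ S) : x ∈ G.cl (S ∪ {z}) := by
  by_contra hxc
  apply G.exchange S x hS hx
  refine ⟨G.cl (S ∪ {z}), G.cl_isSubspace' _, ⟨?_, ?_⟩, ⟨?_, ?_⟩⟩
  · exact Set.subset_union_left.trans (G.subset_cl' _)
  · intro hsub
    exact hzS (hsub (G.subset_cl' _ (Or.inr rfl)))
  · exact G.cl_min' (G.cl_isSubspace' (S ∪ {x}))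
      (Set.union_subset (Set.subset_union_left.trans (G.subset_cl' _))
        (Set.singleton_subset_iff.mpr hz))
  · intro hsub
    exact hxc (hsub (G.subset_cl' _ (Or.inr rfl)))

end GeometryOn

open GeometryOn in
/-- let `X` be an affino-projective subgeometry of an irreducible
projective space `ℙ`, witnessed by a hyperplane `H` (a maximal proper subspace) with
`X ∪ H = ℙ`, and let `E ⊆ X` be a subspace of the subgeometry `X`, with closure
`Ē = cl E` in `ℙ`.  Then: if `E ⊄ H` then `X/E = ℙ/Ē` — every class `[p] ∈ ℙ/Ē`
is represented by a point of `X` (first conjunct) — and in general `X/E` is an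
affino-projective subgeometry of `ℙ/Ē`: `(X/E) ∪ (H/Ē) = ℙ/Ē`, i.e. every class
`[p] ∈ ℙ/Ē` lies in `H/Ē` or is represented by a point of `X` (second conjunct). -/
theorem affinoProjective_quotient {P : Type*} (G : GeometryOn P)
    (hproj : G.IsProjective)
    (hirr : ∀ x y : P, x ≠ y → ∃ z ∈ G.cl {x, y}, z ≠ x ∧ z ≠ y)
    (H : Set P) (hH : G.IsSubspace H) (hHproper : H ≠ Set.univ)
    (hHmax : ∀ p : P, p ∉ H → G.cl (H ∪ {p}) = Set.univ)
    (X : Set P) (hXH : X ∪ H = Set.univ)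
    (E : Set P) (hEX : E ⊆ X) (hE : ∃ T : Set P, G.IsSubspace T ∧ E = T ∩ X) :
    (¬ E ⊆ H → ∀ p : P, p ∉ G.cl E →
      ∃ x ∈ X, x ∉ G.cl E ∧ G.cl (G.cl E ∪ {p}) = G.cl (G.cl E ∪ {x})) ∧
    (∀ p : P, p ∉ G.cl E →
      p ∈ H ∨ ∃ x ∈ X, x ∉ G.cl E ∧ G.cl (G.cl E ∪ {p}) = G.cl (G.cl E ∪ {x})) := by
  have hclE : G.IsSubspace (G.cl E) := G.cl_isSubspace' E
  have key : ∀ p : P, p ∉ G.cl E → p ∈ H → ∀ e ∈ E, e ∉ H →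
      ∃ x ∈ X, x ∉ G.cl E ∧ G.cl (G.cl E ∪ {p}) = G.cl (G.cl E ∪ {x}) := by
    intro p hp hpH e heE heH
    have heCl : e ∈ G.cl E := G.subset_cl' E heE
    have hep : e ≠ p := fun h => hp (h ▸ heCl)
    obtain ⟨z, hz, hze, hzp⟩ := hirr e p hep
    have hz' : z ∈ G.cl ({p} ∪ {e}) := by
      have : ({e, p} : Set P) = {p} ∪ {e} := by
        rw [Set.pair_comm]; rfl
      rwa [this] at hz
    have heInPz : e ∈ G.cl ({p} ∪ {z}) :=
      G.mem_cl_exchange (G.singleton_isSubspace p)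
        (by simpa using hep) hz' (by simpa using hzp)
    have hzH : z ∉ H := by
      intro hzH
      exact heH (G.cl_min' hH (Set.union_subset
        (Set.singleton_subset_iff.mpr hpH) (Set.singleton_subset_iff.mpr hzH)) heInPz)
    have hzX : z ∈ X := by
      have := hXH ▸ Set.mem_univ z
      rcases (Set.ext_iff.mp hXH z).mpr trivial with h | h
      · exact h
      · exact absurd h hzH
    have heInZp : e ∈ G.cl ({z} ∪ {p}) := by
      rwa [Set.union_comm] at heInPz
    have hpInZe : p ∈ G.cl ({z} ∪ {e}) :=
      G.mem_cl_exchange (G.singleton_isSubspace z)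
        (by simpa using fun h => hzp h.symm) heInZp (by simpa using fun h => hze h.symm)
    have hzE : z ∉ G.cl E := by
      intro hzE
      exact hp (G.cl_min' hclE (Set.union_subset
        (Set.singleton_subset_iff.mpr hzE) (Set.singleton_subset_iff.mpr heCl)) hpInZe)
    refine ⟨z, hzX, hzE, Set.Subset.antisymm ?_ ?_⟩
    · apply G.cl_min' (G.cl_isSubspace' _)
      refine Set.union_subset (Set.subset_union_left.trans (G.subset_cl' _)) ?_
      refine Set.singleton_subset_iff.mpr (G.cl_mono' ?_ hpInZe)
      exact Set.union_subset (Set.subset_union_right)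
        (Set.singleton_subset_iff.mpr (Set.subset_union_left heCl))
    · apply G.cl_min' (G.cl_isSubspace' _)
      refine Set.union_subset (Set.subset_union_left.trans (G.subset_cl' _)) ?_
      refine Set.singleton_subset_iff.mpr (G.cl_mono' ?_ hz')
      exact Set.union_subset (Set.subset_union_right)
        (Set.singleton_subset_iff.mpr (Set.subset_union_left heCl))
  have memX : ∀ p : P, p ∉ H → p ∈ X := by
    intro p hpH
    rcases (Set.ext_iff.mp hXH p).mpr trivial with h | h
    · exact h
    · exact absurd h hpH
  constructor
  · intro hEH p hp
    obtain ⟨e, heE, heH⟩ := Set.not_subset.mp hEH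
    by_cases hpH : p ∈ H
    · exact key p hp hpH e heE heH
    · exact ⟨p, memX p hpH, hp, rfl⟩
  · intro p hp
    by_cases hpH : p ∈ H
    · exact Or.inl hpH
    · exact Or.inr ⟨p, memX p hpH, hp, rfl⟩
end
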